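/- arXiv:1511.01111 — 6 statements merged into one kernel-verified Lean document; each statement's English description precedes it below -/
import Mathlib

section
/- For every symmetric norm l on R^n there exist constants 0 < a <= b with b/a <= sqrt(n) such that a * ||x||_2 <= l(x) <= b * ||x||_2 for all x in R^n. -/
/-!
Take `a` the infimum of `l x / ‖x‖₂` over `x ≠ 0` and `b = √n a`; it suffices to show
`l u ‖w‖₂ ≤ √n l w ‖u‖₂` for all `u, w`. By Hahn–Banach there is a vector `γ` with
`⟪v, γ⟫ ≤ l v` for all `v` and `⟪u, γ⟫ = l u`, so `l u ≤ ‖u‖₂ ‖γ‖₂`. By symmetry of `l`,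
`∑ |w (σ i)| |γ i| ≤ l w` for every permutation `σ`: a transposition matching the largest
entries gives `‖w‖∞ ‖γ‖∞ ≤ l w`, and averaging over the cyclic shifts gives
`‖w‖₁ ‖γ‖₁ ≤ n l w`. Since `‖x‖₂² ≤ ‖x‖∞ ‖x‖₁`, these combine to `‖w‖₂ ‖γ‖₂ ≤ √n l w`.
-/

open Finset

theorem Seminorm.exists_dual_le_and_eq {E : Type*} [AddCommGroup E] [Module ℝ E]
    (p : Seminorm ℝ E) (u : E) : ∃ g : Module.Dual ℝ E, (∀ v, g v ≤ p v) ∧ g u = p u := by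
  have H : ∀ c : ℝ, c • u = 0 → c • p u = 0 := fun c hc => by
    rcases smul_eq_zero.1 hc with rfl | rfl <;> simp
  set f := LinearPMap.mkSpanSingleton' (σ := RingHom.id ℝ) u (p u) H
  have hf : ∀ x : f.domain, f x ≤ p x := by
    rintro ⟨x, hx⟩
    obtain ⟨c, rfl⟩ := Submodule.mem_span_singleton.1 hx
    rw [LinearPMap.mkSpanSingleton'_apply, map_smul_eq_mul, smul_eq_mul, RingHom.id_apply,
      Real.norm_eq_abs]
    exact mul_le_mul_of_nonneg_right (le_abs_self c) (apply_nonneg p u)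
  obtain ⟨g, hgu, hgp⟩ := exists_extension_of_le_sublinear f p
    (fun c hc x => by rw [map_smul_eq_mul, Real.norm_of_nonneg hc.le]) (map_add_le_add p) hf
  refine ⟨g, hgp, ?_⟩
  rw [← LinearPMap.mkSpanSingleton'_apply_self (σ := RingHom.id ℝ) u (p u) H
    (Submodule.mem_span_singleton_self u)]
  exact hgu ⟨u, Submodule.mem_span_singleton_self u⟩

theorem Finset.sum_sq_le_mul_sum_abs {ι : Type*} (s : Finset ι) {x : ι → ℝ} {M : ℝ}
    (hM : ∀ i ∈ s, |x i| ≤ M) : ∑ i ∈ s, x i ^ 2 ≤ M * ∑ i ∈ s, |x i| := by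
  rw [mul_sum]
  refine sum_le_sum fun i hi => ?_
  rw [← sq_abs, sq]
  exact mul_le_mul_of_nonneg_right (hM i hi) (abs_nonneg _)

theorem sqrt_sum_sq_pos {ι : Type*} [Fintype ι] {x : ι → ℝ} (hx : x ≠ 0) :
    0 < √(∑ i, x i ^ 2) := by
  obtain ⟨i, hi⟩ := Function.ne_iff.1 hx
  exact Real.sqrt_pos.2 <|
    sum_pos' (fun j _ => sq_nonneg _) ⟨i, mem_univ i, pow_two_pos_of_ne_zero hi⟩

theorem exists_pos_forall_le_and_le_mul {α : Type*} [Nonempty α] {r : α → ℝ} {c : ℝ}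
    (hc : 0 < c) (hr : ∀ x, 0 < r x) (h : ∀ x y, r x ≤ c * r y) :
    ∃ a, 0 < a ∧ ∀ x, a ≤ r x ∧ r x ≤ c * a := by
  have hbdd : BddBelow (Set.range r) := ⟨0, by rintro _ ⟨x, rfl⟩; exact (hr x).le⟩
  have hdiv_le : ∀ x, r x / c ≤ ⨅ y, r y := fun x => le_ciInf fun y => (div_le_iff₀' hc).2 (h x y)
  obtain ⟨x₀⟩ := ‹Nonempty α›
  exact ⟨⨅ y, r y, (div_pos (hr x₀) hc).trans_le (hdiv_le x₀),
    fun x => ⟨ciInf_le hbdd x, (div_le_iff₀' hc).1 (hdiv_le x)⟩⟩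

structure Seminorm.IsSymmetric {ι : Type*} (p : Seminorm ℝ (ι → ℝ)) : Prop where
  comp_perm : ∀ (σ : Equiv.Perm ι) x, p (fun i => x (σ i)) = p x
  abs : ∀ x, p (fun i => |x i|) = p x

namespace Seminorm.IsSymmetric

variable {ι : Type*} [Fintype ι] {p : Seminorm ℝ (ι → ℝ)} {γ : ι → ℝ}

theorem sum_abs_comp_perm_mul_abs_le (hp : p.IsSymmetric) (hγ : ∀ v, ∑ i, v i * γ i ≤ p v)
    (w : ι → ℝ) (σ : Equiv.Perm ι) : ∑ i, |w (σ i)| * |γ i| ≤ p w := by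
  set v : ι → ℝ := fun i => if 0 ≤ γ i then |w (σ i)| else -|w (σ i)|
  have hv : p v = p w := by
    have habs : (fun i => |v i|) = fun i => |w (σ i)| := by
      funext i; simp only [v]; split_ifs <;> simp
    rw [← hp.abs v, habs, hp.comp_perm σ fun j => |w j|, hp.abs]
  have hvγ : ∀ i, v i * γ i = |w (σ i)| * |γ i| := by
    intro i
    by_cases h : 0 ≤ γ i
    · simp [v, h, abs_of_nonneg h]
    · simp [v, h, abs_of_neg (not_le.1 h)]
  simpa only [hvγ, hv] using hγ v

theorem abs_apply_mul_abs_apply_le [DecidableEq ι] (hp : p.IsSymmetric)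
    (hγ : ∀ v, ∑ i, v i * γ i ≤ p v) (w : ι → ℝ) (i j : ι) : |w j| * |γ i| ≤ p w :=
  calc |w j| * |γ i| = |w (Equiv.swap i j i)| * |γ i| := by rw [Equiv.swap_apply_left]
    _ ≤ ∑ k, |w (Equiv.swap i j k)| * |γ k| :=
      single_le_sum (f := fun k => |w (Equiv.swap i j k)| * |γ k|)
        (fun _ _ => by positivity) (mem_univ i)
    _ ≤ p w := hp.sum_abs_comp_perm_mul_abs_le hγ w _

theorem sum_abs_mul_sum_abs_le [AddGroup ι] (hp : p.IsSymmetric)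
    (hγ : ∀ v, ∑ i, v i * γ i ≤ p v) (w : ι → ℝ) :
    (∑ i, |w i|) * ∑ i, |γ i| ≤ Fintype.card ι * p w :=
  calc (∑ i, |w i|) * ∑ i, |γ i| = ∑ i, (∑ k, |w (i + k)|) * |γ i| := by
        rw [mul_sum]
        refine sum_congr rfl fun i _ => ?_
        rw [← Equiv.sum_comp (Equiv.addLeft i) fun j => |w j|]
        rfl
    _ = ∑ k, ∑ i, |w (i + k)| * |γ i| := by simp only [sum_mul]; exact sum_comm
    _ ≤ ∑ _k : ι, p w :=
        sum_le_sum fun k _ => hp.sum_abs_comp_perm_mul_abs_le hγ w (Equiv.addRight k)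
    _ = Fintype.card ι * p w := by rw [sum_const, card_univ, nsmul_eq_mul]

theorem sum_sq_mul_sum_sq_le [AddGroup ι] [DecidableEq ι] (hp : p.IsSymmetric)
    (hγ : ∀ v, ∑ i, v i * γ i ≤ p v) (w : ι → ℝ) :
    (∑ i, w i ^ 2) * ∑ i, γ i ^ 2 ≤ Fintype.card ι * p w ^ 2 := by
  obtain ⟨j, hj⟩ := Finite.exists_max fun k => |w k|
  obtain ⟨i, hi⟩ := Finite.exists_max fun k => |γ k|
  calc (∑ k, w k ^ 2) * ∑ k, γ k ^ 2
      ≤ (|w j| * ∑ k, |w k|) * (|γ i| * ∑ k, |γ k|) :=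
        mul_le_mul (sum_sq_le_mul_sum_abs _ fun k _ => hj k)
          (sum_sq_le_mul_sum_abs _ fun k _ => hi k) (by positivity) (by positivity)
    _ = (|w j| * |γ i|) * ((∑ k, |w k|) * ∑ k, |γ k|) := by ring
    _ ≤ p w * (Fintype.card ι * p w) :=
        mul_le_mul (hp.abs_apply_mul_abs_apply_le hγ w i j)
          (hp.sum_abs_mul_sum_abs_le hγ w) (by positivity) (apply_nonneg p w)
    _ = Fintype.card ι * p w ^ 2 := by ring

theorem mul_sqrt_sum_sq_le [AddGroup ι] [DecidableEq ι] (hp : p.IsSymmetric) (u w : ι → ℝ) :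
    p u * √(∑ i, w i ^ 2) ≤ √(Fintype.card ι) * p w * √(∑ i, u i ^ 2) := by
  obtain ⟨g, hgp, hgu⟩ := p.exists_dual_le_and_eq u
  set γ : ι → ℝ := fun i => g fun j => if i = j then 1 else 0
  have hgγ : ∀ v, g v = ∑ i, v i * γ i := fun v => by simp [γ, g.pi_apply_eq_sum_univ v]
  have hγ : ∀ v, ∑ i, v i * γ i ≤ p v := fun v => hgγ v ▸ hgp v
  have hw : √(∑ i, w i ^ 2) * √(∑ i, γ i ^ 2) ≤ √(Fintype.card ι) * p w := by
    rw [← Real.sqrt_mul (by positivity), ← Real.sqrt_sq (apply_nonneg p w),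
      ← Real.sqrt_mul (by positivity)]
    exact Real.sqrt_le_sqrt (hp.sum_sq_mul_sum_sq_le hγ w)
  calc p u * √(∑ i, w i ^ 2) = (∑ i, u i * γ i) * √(∑ i, w i ^ 2) := by rw [← hgu, hgγ]
    _ ≤ √(∑ i, u i ^ 2) * √(∑ i, γ i ^ 2) * √(∑ i, w i ^ 2) :=
        mul_le_mul_of_nonneg_right (Real.sum_mul_le_sqrt_mul_sqrt _ u γ) (by positivity)
    _ = √(∑ i, u i ^ 2) * (√(∑ i, w i ^ 2) * √(∑ i, γ i ^ 2)) := by ring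
    _ ≤ √(∑ i, u i ^ 2) * (√(Fintype.card ι) * p w) :=
        mul_le_mul_of_nonneg_left hw (by positivity)
    _ = √(Fintype.card ι) * p w * √(∑ i, u i ^ 2) := by ring

end Seminorm.IsSymmetric

/-- John's theorem for symmetric norms: every symmetric norm `l` on `ℝ^n` admits
constants `0 < a ≤ b` with `b / a ≤ √n` such that
`a ‖x‖₂ ≤ l x ≤ b ‖x‖₂` for all `x`. -/
theorem johns_theorem_symmetric_norms {n : ℕ} (hn : 0 < n) (l : (Fin n → ℝ) → ℝ)
    (htri : ∀ x y, l (x + y) ≤ l x + l y)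
    (hhom : ∀ (c : ℝ) x, l (c • x) = |c| * l x)
    (hdef : ∀ x, l x = 0 ↔ x = 0)
    (hperm : ∀ (σ : Equiv.Perm (Fin n)) x, l (fun i => x (σ i)) = l x)
    (hsign : ∀ x, l (fun i => |x i|) = l x) :
    ∃ a b : ℝ, 0 < a ∧ a ≤ b ∧ b / a ≤ Real.sqrt n ∧
      ∀ x : Fin n → ℝ,
        a * Real.sqrt (∑ i, (x i) ^ 2) ≤ l x ∧
          l x ≤ b * Real.sqrt (∑ i, (x i) ^ 2) := by
  have : NeZero n := ⟨hn.ne'⟩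
  have : Nonempty {x : Fin n → ℝ // x ≠ 0} := ⟨⟨Pi.single 0 1, by simp⟩⟩
  set p : Seminorm ℝ (Fin n → ℝ) := Seminorm.of l htri hhom
  have hp : p.IsSymmetric := ⟨hperm, hsign⟩
  have hl_pos : ∀ x, x ≠ 0 → 0 < l x := fun x hx =>
    (apply_nonneg p x).lt_of_ne' fun h => hx ((hdef x).1 h)
  obtain ⟨a, ha, hr⟩ := exists_pos_forall_le_and_le_mul (α := {x : Fin n → ℝ // x ≠ 0})
    (r := fun x => l x / √(∑ i, x.1 i ^ 2)) (Real.sqrt_pos.2 (Nat.cast_pos.2 hn))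
    (fun x => div_pos (hl_pos x x.2) (sqrt_sum_sq_pos x.2)) fun x y => by
      rw [div_le_iff₀ (sqrt_sum_sq_pos x.2), mul_div_assoc', div_mul_eq_mul_div,
        le_div_iff₀ (sqrt_sum_sq_pos y.2)]
      have key := hp.mul_sqrt_sum_sq_le x y
      rwa [Fintype.card_fin] at key
  refine ⟨a, √n * a, ha, le_mul_of_one_le_left ha.le (Real.one_le_sqrt.2 (by exact_mod_cast hn)),
    by rw [mul_div_cancel_right₀ _ ha.ne'], fun x => ?_⟩
  rcases eq_or_ne x 0 with rfl | hx
  · simp [(hdef 0).2 rfl]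
  obtain ⟨hlow, hup⟩ := hr ⟨x, hx⟩
  exact ⟨(le_div_iff₀ (sqrt_sum_sq_pos hx)).1 hlow, (div_le_iff₀ (sqrt_sum_sq_pos hx)).1 hup⟩
end

section
/- Let l be a symmetric norm on R^n, let V in R^n be a vector whose nonzero coordinates consist of disjoint groups of equal values (level vector), let V_i be the vector supported on the i-th group with b_i nonzero coordinates all equal to alpha^i, and let hat{V}_i be V_i with only hat{b}_i <= b_i of those coordinates kept nonzero. Then l evaluated at the vector obtained from V by replacing group i with hat{V}_i is at least (hat{b}_i / b_i) * l(V). -/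
/-!
`l` is a seminorm, so two facts about it give the bound. Averaging `W` over the `b` cyclic shifts
of the group `B i₀` turns it into the vector `X` that is constant `(#S / b) α^(i₀+1)` on the group
and agrees with `V` elsewhere; as `l` is permutation invariant and subadditive, `l X ≤ l W`.
Shrinking coordinates in absolute value does not increase `l`: the shrunk vector is a convex
combination of `X` and a sign flip of `X`, both of norm `l X`. Shrinking the coordinates of `X`
outside the group by the factor `#S / b` gives `(#S / b) • V`.
-/

open Finset

variable {ι : Type*} [DecidableEq ι]

theorem Finset.exists_perms_sum_apply_eq (s : Finset ι) (hs : s.Nonempty) :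
    ∃ σ : Fin s.card → Equiv.Perm ι, (∀ k, ∀ j ∉ s, σ k j = j) ∧
      ∀ (x : ι → ℝ), ∀ j ∈ s, ∑ k, x (σ k j) = ∑ j' ∈ s, x j' := by
  have : NeZero s.card := ⟨hs.card_pos.ne'⟩
  let e := s.equivFin
  refine ⟨fun k => Equiv.Perm.ofSubtype ((e.trans (Equiv.addRight k)).trans e.symm),
    fun k j hj => Equiv.Perm.ofSubtype_apply_of_not_mem _ hj, fun x j hj => ?_⟩
  simp only [Equiv.Perm.ofSubtype_apply_of_mem _ hj]
  calc ∑ k, x (e.symm (Equiv.addLeft (e ⟨j, hj⟩) k))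
      = ∑ m, x (e.symm m) := Equiv.sum_comp (Equiv.addLeft (e ⟨j, hj⟩)) (fun m => x (e.symm m))
    _ = ∑ a : s, x a := Equiv.sum_comp e.symm (fun a => x a)
    _ = ∑ j' ∈ s, x j' := Finset.sum_coe_sort s x

namespace Seminorm

variable (p : Seminorm ℝ (ι → ℝ))

theorem apply_piecewise_smul_le (hsign : ∀ x, p (fun i => |x i|) = p x) (s : Finset ι)
    (x : ι → ℝ) {c : ℝ} (hc : |c| ≤ 1) : p (s.piecewise (c • x) x) ≤ p x := by
  rw [abs_le] at hc
  set x' := s.piecewise (-x) x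
  have hx' : p x' = p x := by
    rw [← hsign x', ← hsign x]
    congr 1
    funext i
    by_cases hi : i ∈ s <;> simp [x', hi]
  have hsplit : s.piecewise (c • x) x = ((1 + c) / 2) • x + ((1 - c) / 2) • x' := by
    funext i
    by_cases hi : i ∈ s <;>
      simp only [x', hi, piecewise_eq_of_mem, piecewise_eq_of_notMem, not_false_eq_true,
        Pi.add_apply, Pi.neg_apply, Pi.smul_apply, smul_eq_mul] <;>
      ring
  calc p (s.piecewise (c • x) x) ≤ |(1 + c) / 2| * p x + |(1 - c) / 2| * p x' := by
        rw [hsplit, ← Real.norm_eq_abs, ← Real.norm_eq_abs, ← map_smul_eq_mul p,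
          ← map_smul_eq_mul p]
        exact map_add_le_add p _ _
    _ = p x := by
        rw [hx', abs_of_nonneg (by linarith), abs_of_nonneg (by linarith)]
        ring

theorem apply_piecewise_average_le (hperm : ∀ (σ : Equiv.Perm ι) x, p (fun i => x (σ i)) = p x)
    (s : Finset ι) (x : ι → ℝ) :
    p (s.piecewise (fun _ => (∑ j ∈ s, x j) / s.card) x) ≤ p x := by
  rcases s.eq_empty_or_nonempty with rfl | hs
  · rw [piecewise_empty]
  obtain ⟨σ, hσout, hσin⟩ := s.exists_perms_sum_apply_eq hs
  have hcard : (0 : ℝ) < s.card := by exact_mod_cast hs.card_pos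
  have hsum : (s.card : ℝ) • s.piecewise (fun _ => (∑ j ∈ s, x j) / s.card) x =
      ∑ k, fun i => x (σ k i) := by
    funext i
    rw [Finset.sum_apply]
    by_cases hi : i ∈ s
    · simp [hi, hσin x i hi, mul_div_cancel₀ _ hcard.ne']
    · simp [hi, hσout _ i hi]
  have hsub := Finset.le_sum_of_subadditive p (map_zero p).le (map_add_le_add p) univ
    fun k i => x (σ k i)
  rw [← hsum, map_smul_eq_mul, Real.norm_of_nonneg hcard.le] at hsub
  simp only [hperm, sum_const, card_univ, Fintype.card_fin, nsmul_eq_mul] at hsub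
  exact le_of_mul_le_mul_left hsub hcard

end Seminorm

theorem bucket_approximation_general {n t : ℕ} (l : (Fin n → ℝ) → ℝ)
    (htri : ∀ x y, l (x + y) ≤ l x + l y)
    (hhom : ∀ (c : ℝ) x, l (c • x) = |c| * l x)
    (hperm : ∀ (σ : Equiv.Perm (Fin n)) x, l (fun i => x (σ i)) = l x)
    (hsign : ∀ x, l (fun i => |x i|) = l x)
    (α : ℝ)
    (B : Fin t → Finset (Fin n))
    (V : Fin n → ℝ)
    (hVlevel : ∀ i : Fin t, ∀ j ∈ B i, V j = α ^ ((i : ℕ) + 1))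
    (i₀ : Fin t)
    (S : Finset (Fin n)) (hS : S ⊆ B i₀)
    (W : Fin n → ℝ)
    (hWout : ∀ j : Fin n, j ∉ B i₀ → W j = V j)
    (hWin : ∀ j ∈ S, W j = α ^ ((i₀ : ℕ) + 1))
    (hWzero : ∀ j ∈ B i₀, j ∉ S → W j = 0) :
    ((S.card : ℝ) / (B i₀).card) * l V ≤ l W := by
  let p : Seminorm ℝ (Fin n → ℝ) := Seminorm.of l htri fun c x => by rw [hhom, Real.norm_eq_abs]
  set c : ℝ := S.card / (B i₀).card
  have hc0 : 0 ≤ c := by positivity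
  have hc1 : |c| ≤ 1 := by
    rw [abs_of_nonneg hc0]
    exact div_le_one_of_le₀ (by exact_mod_cast card_le_card hS) (by positivity)
  have hWsum : ∑ j ∈ B i₀, W j = S.card * α ^ ((i₀ : ℕ) + 1) := by
    rw [← sum_subset hS hWzero, sum_congr rfl hWin, sum_const, nsmul_eq_mul]
  set X := (B i₀).piecewise (fun _ => (∑ j ∈ B i₀, W j) / (B i₀).card) W
  have hX : (B i₀)ᶜ.piecewise (c • X) X = c • V := by
    funext j
    by_cases hj : j ∈ B i₀
    · simp only [X, mem_compl, hj, not_true_eq_false, not_false_eq_true, piecewise_eq_of_notMem,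
        piecewise_eq_of_mem, hWsum, Pi.smul_apply, smul_eq_mul, hVlevel i₀ j hj]
      exact mul_div_right_comm _ _ _
    · simp [X, hj, hWout j hj]
  calc c * l V = l (c • V) := by rw [hhom, abs_of_nonneg hc0]
    _ ≤ l X := hX ▸ p.apply_piecewise_smul_le hsign _ X hc1
    _ ≤ l W := p.apply_piecewise_average_le hperm _ W

/-- Bucket approximation lower bound: for a symmetric norm `l` and a level
vector `V` (value `α^(i+1)` on the `i`-th group `B i`, groups pairwise
disjoint, zero elsewhere), replacing the `i₀`-th group by a sub-group `S ⊆ B i₀`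
(keeping `S.card` of the `(B i₀).card` nonzero coordinates) yields a vector `W`
with `l W ≥ (S.card / (B i₀).card) * l V`. -/
theorem bucket_approximation {n t : ℕ} (l : (Fin n → ℝ) → ℝ)
    (htri : ∀ x y, l (x + y) ≤ l x + l y)
    (hhom : ∀ (c : ℝ) x, l (c • x) = |c| * l x)
    (hdef : ∀ x, l x = 0 ↔ x = 0)
    (hperm : ∀ (σ : Equiv.Perm (Fin n)) x, l (fun i => x (σ i)) = l x)
    (hsign : ∀ x, l (fun i => |x i|) = l x)
    (α : ℝ) (hα : 1 < α)
    (B : Fin t → Finset (Fin n))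
    (hdisj : ∀ i i' : Fin t, i ≠ i' → Disjoint (B i) (B i'))
    (V : Fin n → ℝ)
    (hV0 : ∀ j : Fin n, (∀ i : Fin t, j ∉ B i) → V j = 0)
    (hVlevel : ∀ i : Fin t, ∀ j ∈ B i, V j = α ^ ((i : ℕ) + 1))
    (i₀ : Fin t) (hne : (B i₀).Nonempty)
    (S : Finset (Fin n)) (hS : S ⊆ B i₀)
    (W : Fin n → ℝ)
    (hWout : ∀ j : Fin n, j ∉ B i₀ → W j = V j)
    (hWin : ∀ j ∈ S, W j = α ^ ((i₀ : ℕ) + 1))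
    (hWzero : ∀ j ∈ B i₀, j ∉ S → W j = 0) :
    ((S.card : ℝ) / (B i₀).card) * l V ≤ l W :=
  bucket_approximation_general l htri hhom hperm hsign α B V hVlevel i₀ S hS W hWout hWin hWzero
end

section
/- For a uniformly random point x on the Euclidean unit sphere S^{n-1}, with probability greater than 2/3, more than n/2 of the coordinates of x satisfy |x_i| > 1/(K*sqrt(n)), where K is a suitable universal constant. -/
open MeasureTheory Metric
open scoped ENNReal

/-- The uniform (Haar) probability measure on the unit Euclidean sphere in `ℝ^n`. -/
noncomputable def uniformSphere (n : ℕ) :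
    Measure (sphere (0 : EuclideanSpace ℝ (Fin n)) 1) :=
  ((volume : Measure (EuclideanSpace ℝ (Fin n))).toSphere Set.univ)⁻¹ •
    (volume : Measure (EuclideanSpace ℝ (Fin n))).toSphere

/-! The uniform measure of `A ⊆ S^{n-1}` is the volume of the cone `(0,1) • A` divided by
`vol Bⁿ`, so it suffices to bound the cone over the set of points with at most `n/2` coordinates
larger than `t`. Every point of that cone lies in `Bⁿ` and has at least `n/2` coordinates of size
at most `t`; by Markov's inequality for the number of such coordinates, these points have volume
at most `(2/n) ∑ᵢ vol {y ∈ Bⁿ | |yᵢ| ≤ t} ≤ 4t · vol Bⁿ⁻¹`. Conversely `Bⁿ` contains the cylinder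
`(-s, s) × Bⁿ⁻¹(√(1 - s²))`; for `s = 1/(2√n)` Bernoulli's inequality gives
`(1 - s²)^((n-1)/2) ≥ 3/4`, hence `vol Bⁿ ≥ 3/(4√n) · vol Bⁿ⁻¹`.
For `t = 1/(20√n)` the cone therefore has less than a third of the volume of `Bⁿ`. -/

open Set Finset
open scoped Pointwise

section Counting

variable {α ι : Type*} [MeasurableSpace α] [Fintype ι]

theorem measurable_card_filter {p : ι → α → Prop} [∀ i, DecidablePred (p i)]
    (hp : ∀ i, MeasurableSet {x | p i x}) :
    Measurable fun x => #{i | p i x} := by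
  simp only [card_filter]
  exact Finset.measurable_sum _ fun i _ => Measurable.ite (hp i) measurable_const measurable_const

theorem mul_measure_le_card_filter_mem_le_sum (μ : Measure α) {S : ι → Set α}
    [∀ i, DecidablePred (· ∈ S i)] (hS : ∀ i, MeasurableSet (S i)) (c : ℝ≥0∞) :
    c * μ {x | c ≤ #{i | x ∈ S i}} ≤ ∑ i, μ (S i) := by
  have hcount (x : α) : (#{i | x ∈ S i} : ℝ≥0∞) = ∑ i, (S i).indicator 1 x := by
    simp only [natCast_card_filter, Set.indicator_apply, Pi.one_apply]
  have hmeas (i : ι) : Measurable ((S i).indicator 1 : α → ℝ≥0∞) :=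
    measurable_const.indicator (hS i)
  simp_rw [hcount]
  calc _ ≤ ∫⁻ x, ∑ i, (S i).indicator 1 x ∂μ :=
        mul_meas_ge_le_lintegral (Finset.measurable_sum _ fun i _ => hmeas i) c
    _ = ∑ i, μ (S i) := by
        simp_rw [lintegral_finsetSum _ fun i _ => hmeas i, lintegral_indicator_one (hS _)]

end Counting

theorem one_sub_mul_le_sqrt_one_sub_pow {a : ℝ} (ha₀ : 0 ≤ a) (ha₁ : a ≤ 1) (m : ℕ) :
    1 - m * a ≤ √(1 - a) ^ m := by
  have hle : 1 - a ≤ √(1 - a) := Real.le_sqrt_of_sq_le (by nlinarith)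
  calc 1 - m * a ≤ (1 - a) ^ m := by
        simpa [sub_eq_add_neg] using one_add_mul_le_pow (by linarith : -2 ≤ -a) m
    _ ≤ √(1 - a) ^ m := pow_le_pow_left₀ (by linarith) hle m

namespace EuclideanSpace

variable {m : ℕ}

noncomputable def splitCoord (i : Fin (m + 1)) :
    EuclideanSpace ℝ (Fin (m + 1)) ≃ᵐ ℝ × EuclideanSpace ℝ (Fin m) :=
  (MeasurableEquiv.toLp 2 _).symm.trans <| (MeasurableEquiv.piFinSuccAbove (fun _ => ℝ) i).trans <|
    MeasurableEquiv.prodCongr (MeasurableEquiv.refl ℝ) (MeasurableEquiv.toLp 2 _)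

theorem measurePreserving_splitCoord (i : Fin (m + 1)) :
    MeasurePreserving (splitCoord i) := by
  refine (volume_preserving_symm_measurableEquiv_toLp _).trans <|
    (volume_preserving_piFinSuccAbove (fun _ => ℝ) i).trans ?_
  rw [Measure.volume_eq_prod, Measure.volume_eq_prod]
  exact (MeasurePreserving.id volume).prod (PiLp.volume_preserving_toLp _)

theorem norm_sq_eq_sq_add_norm_splitCoord_snd_sq (i : Fin (m + 1))
    (x : EuclideanSpace ℝ (Fin (m + 1))) :
    ‖x‖ ^ 2 = x i ^ 2 + ‖(splitCoord i x).2‖ ^ 2 := by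
  simp only [norm_sq_eq, Real.norm_eq_abs, sq_abs, Fin.sum_univ_succAbove _ i]
  rfl

theorem volume_setOf_abs_apply_le_and_norm_lt_one_le (i : Fin (m + 1)) (t : ℝ) :
    volume {x : EuclideanSpace ℝ (Fin (m + 1)) | |x i| ≤ t ∧ ‖x‖ < 1} ≤
      ENNReal.ofReal (2 * t) * volume (ball (0 : EuclideanSpace ℝ (Fin m)) 1) := by
  have hsub : {x : EuclideanSpace ℝ (Fin (m + 1)) | |x i| ≤ t ∧ ‖x‖ < 1} ⊆
      splitCoord i ⁻¹' (Icc (-t) t ×ˢ ball 0 1) := by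
    rintro x ⟨hxi, hx⟩
    have := norm_sq_eq_sq_add_norm_splitCoord_snd_sq i x
    refine ⟨abs_le.mp hxi, mem_ball_zero_iff.mpr ?_⟩
    nlinarith [norm_nonneg (splitCoord i x).2, sq_nonneg (x i), norm_nonneg x]
  calc _ ≤ volume (splitCoord i ⁻¹' (Icc (-t) t ×ˢ ball 0 1)) := measure_mono hsub
    _ = ENNReal.ofReal (2 * t) * volume (ball (0 : EuclideanSpace ℝ (Fin m)) 1) := by
      rw [(measurePreserving_splitCoord i).measure_preimage_equiv, Measure.volume_eq_prod,
        Measure.prod_prod, Real.volume_Icc, sub_neg_eq_add, two_mul]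

theorem ofReal_mul_volume_ball_sqrt_le_volume_ball_succ (s : ℝ) :
    ENNReal.ofReal (2 * s) * volume (ball (0 : EuclideanSpace ℝ (Fin m)) √(1 - s ^ 2)) ≤
      volume (ball (0 : EuclideanSpace ℝ (Fin (m + 1))) 1) := by
  have hsub : splitCoord 0 ⁻¹' (Ioo (-s) s ×ˢ ball 0 √(1 - s ^ 2)) ⊆
      ball (0 : EuclideanSpace ℝ (Fin (m + 1))) 1 := by
    rintro x ⟨hx0, hx⟩
    rw [mem_ball_zero_iff] at hx ⊢
    have hx0 : x 0 ^ 2 < s ^ 2 := sq_lt_sq' hx0.1 hx0.2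
    have hx : ‖(splitCoord 0 x).2‖ ^ 2 < 1 - s ^ 2 :=
      Real.lt_sqrt (norm_nonneg _) |>.mp hx
    have := norm_sq_eq_sq_add_norm_splitCoord_snd_sq 0 x
    nlinarith [norm_nonneg x]
  calc _ = volume (splitCoord 0 ⁻¹' (Ioo (-s) s ×ˢ ball 0 √(1 - s ^ 2))) := by
        rw [(measurePreserving_splitCoord 0).measure_preimage_equiv, Measure.volume_eq_prod,
          Measure.prod_prod, Real.volume_Ioo, sub_neg_eq_add, two_mul]
    _ ≤ _ := measure_mono hsub

variable (m) in
theorem ofReal_mul_volume_ball_le_volume_ball_succ :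
    ENNReal.ofReal (3 / (4 * √(m + 1))) * volume (ball (0 : EuclideanSpace ℝ (Fin m)) 1) ≤
      volume (ball (0 : EuclideanSpace ℝ (Fin (m + 1))) 1) := by
  set s := 1 / (2 * √(m + 1))
  have hsq : s ^ 2 = 1 / (4 * (m + 1)) := by
    rw [div_pow, mul_pow, Real.sq_sqrt (by positivity)]; norm_num
  have hs₁ : s ^ 2 < 1 := by rw [hsq, div_lt_one (by positivity)]; linarith
  have hr : 0 < √(1 - s ^ 2) := Real.sqrt_pos.mpr (sub_pos.mpr hs₁)
  have hpow : 3 / 4 ≤ √(1 - s ^ 2) ^ m := by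
    have hm : (m : ℝ) * s ^ 2 ≤ 1 / 4 := by
      rw [hsq, mul_one_div, div_le_div_iff₀ (by positivity) (by norm_num)]; linarith
    linarith [one_sub_mul_le_sqrt_one_sub_pow (sq_nonneg s) hs₁.le m]
  calc ENNReal.ofReal (3 / (4 * √(m + 1))) * volume (ball (0 : EuclideanSpace ℝ (Fin m)) 1)
      ≤ ENNReal.ofReal (2 * s) * (ENNReal.ofReal (√(1 - s ^ 2) ^ m) *
          volume (ball (0 : EuclideanSpace ℝ (Fin m)) 1)) := by
        rw [← mul_assoc, ← ENNReal.ofReal_mul (by positivity)]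
        gcongr
        calc 3 / (4 * √(m + 1)) = 2 * s * (3 / 4) := by ring
          _ ≤ _ := by gcongr
    _ = ENNReal.ofReal (2 * s) * volume (ball (0 : EuclideanSpace ℝ (Fin m)) √(1 - s ^ 2)) := by
        rw [Measure.addHaar_ball_of_pos _ _ hr, finrank_euclideanSpace_fin]
    _ ≤ _ := ofReal_mul_volume_ball_sqrt_le_volume_ball_succ s

def ballManySmallCoords (n : ℕ) (t : ℝ) : Set (EuclideanSpace ℝ (Fin n)) :=
  {y | ‖y‖ < 1 ∧ n ≤ 2 * #{i | |y i| ≤ t}}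

variable (m) in
theorem volume_ballManySmallCoords_le (t : ℝ) :
    volume (ballManySmallCoords (m + 1) t) ≤
      ENNReal.ofReal (4 * t) * volume (ball (0 : EuclideanSpace ℝ (Fin m)) 1) := by
  set S : Fin (m + 1) → Set (EuclideanSpace ℝ (Fin (m + 1))) :=
    fun i => {x | |x i| ≤ t ∧ ‖x‖ < 1}
  have hS (i : Fin (m + 1)) : MeasurableSet (S i) :=
    (measurableSet_le (measurable_pi_apply i |>.comp (PiLp.continuous_ofLp 2 _).measurable).abs
      measurable_const).inter (measurableSet_lt measurable_norm measurable_const)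
  set c : ℝ≥0∞ := (m + 1 : ℝ≥0∞) / 2
  have hc₀ : c ≠ 0 := by simp [c]
  have hc : c ≠ ⊤ := ENNReal.div_ne_top (by simp) two_ne_zero
  have hsub : ballManySmallCoords (m + 1) t ⊆ {x | c ≤ #{i | x ∈ S i}} := by
    rintro x ⟨hx, hcount⟩
    have : #{i | x ∈ S i} = #{i | |x i| ≤ t} := by simp [S, hx]
    refine ENNReal.div_le_of_le_mul ?_
    rw [this]
    exact_mod_cast (by omega : m + 1 ≤ #{i | |x i| ≤ t} * 2)
  refine (ENNReal.mul_le_mul_iff_right hc₀ hc).mp ?_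
  calc c * volume _ ≤ c * volume {x | c ≤ #{i | x ∈ S i}} := by gcongr
    _ ≤ ∑ i, volume (S i) := mul_measure_le_card_filter_mem_le_sum volume hS c
    _ ≤ ∑ _i : Fin (m + 1),
          ENNReal.ofReal (2 * t) * volume (ball (0 : EuclideanSpace ℝ (Fin m)) 1) :=
        Finset.sum_le_sum fun i _ => volume_setOf_abs_apply_le_and_norm_lt_one_le i t
    _ = c * (ENNReal.ofReal (4 * t) * volume (ball (0 : EuclideanSpace ℝ (Fin m)) 1)) := by
        have h4 : ENNReal.ofReal (4 * t) = 2 * ENNReal.ofReal (2 * t) := by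
          rw [← ENNReal.ofReal_ofNat 2, ← ENNReal.ofReal_mul zero_le_two, ← mul_assoc]; norm_num
        have hc2 : c * 2 = m + 1 := ENNReal.div_mul_cancel two_ne_zero ENNReal.ofNat_ne_top
        rw [sum_const, card_univ, Fintype.card_fin, nsmul_eq_mul, h4, Nat.cast_add_one, ← hc2]
        ring

variable (m) in
theorem volume_ballManySmallCoords_mul_three_lt :
    volume (ballManySmallCoords (m + 1) (1 / (20 * √((m + 1 : ℕ) : ℝ)))) * 3 <
      volume (ball (0 : EuclideanSpace ℝ (Fin (m + 1))) 1) := by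
  have hB₀ : volume (ball (0 : EuclideanSpace ℝ (Fin m)) 1) ≠ 0 :=
    (measure_ball_pos _ _ one_pos).ne'
  have hB : volume (ball (0 : EuclideanSpace ℝ (Fin m)) 1) ≠ ⊤ := measure_ball_lt_top.ne
  have hsqrt : 0 < √(m + 1 : ℝ) := by positivity
  calc _ ≤ ENNReal.ofReal (4 * (1 / (20 * √((m + 1 : ℕ) : ℝ)))) *
          volume (ball (0 : EuclideanSpace ℝ (Fin m)) 1) * 3 := by
        gcongr; exact volume_ballManySmallCoords_le m _
    _ = ENNReal.ofReal (3 / (5 * √(m + 1))) * volume (ball (0 : EuclideanSpace ℝ (Fin m)) 1) := by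
        rw [mul_right_comm, ← ENNReal.ofReal_ofNat 3, ← ENNReal.ofReal_mul' (by norm_num)]
        congr 2
        push_cast
        field_simp
        norm_num
    _ < ENNReal.ofReal (3 / (4 * √(m + 1))) * volume (ball (0 : EuclideanSpace ℝ (Fin m)) 1) := by
        gcongr
        rw [ENNReal.ofReal_lt_ofReal_iff (by positivity)]
        gcongr
        norm_num
    _ ≤ _ := ofReal_mul_volume_ball_le_volume_ball_succ m

end EuclideanSpace

section uniformSphere

variable {n : ℕ}

theorem uniformSphere_apply [NeZero n] {A : Set (sphere (0 : EuclideanSpace ℝ (Fin n)) 1)}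
    (hA : MeasurableSet A) :
    uniformSphere n A = volume (Ioo (0 : ℝ) 1 • ((↑) '' A : Set (EuclideanSpace ℝ (Fin n)))) /
      volume (ball (0 : EuclideanSpace ℝ (Fin n)) 1) := by
  have hn : (n : ℝ≥0∞) ≠ 0 := Nat.cast_ne_zero.mpr (NeZero.ne n)
  rw [uniformSphere, Measure.smul_apply, smul_eq_mul, Measure.toSphere_apply_univ,
    Measure.toSphere_apply' _ hA, finrank_euclideanSpace_fin, mul_comm, ← div_eq_mul_inv,
    ENNReal.mul_div_mul_left _ _ hn (ENNReal.natCast_ne_top n)]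

instance [NeZero n] : IsProbabilityMeasure (uniformSphere n) := by
  have hn : (n : ℝ≥0∞) ≠ 0 := Nat.cast_ne_zero.mpr (NeZero.ne n)
  refine ⟨ENNReal.inv_mul_cancel ?_ ?_⟩ <;>
    rw [Measure.toSphere_apply_univ, finrank_euclideanSpace_fin]
  · exact mul_ne_zero hn (measure_ball_pos _ _ one_pos).ne'
  · exact ENNReal.mul_ne_top (ENNReal.natCast_ne_top n) measure_ball_lt_top.ne

theorem Ioo_smul_image_val_subset_ballManySmallCoords (t : ℝ) :
    Ioo (0 : ℝ) 1 • ((↑) '' {x : sphere (0 : EuclideanSpace ℝ (Fin n)) 1 |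
        (#{i | t < |(x : EuclideanSpace ℝ (Fin n)) i|} : ℝ) ≤ n / 2} :
        Set (EuclideanSpace ℝ (Fin n))) ⊆
      EuclideanSpace.ballManySmallCoords n t := by
  intro y hy
  obtain ⟨r, ⟨hr₀, hr₁⟩, _, ⟨x, hx, rfl⟩, rfl⟩ := Set.mem_smul.mp hy
  refine ⟨by simpa [norm_smul, abs_of_pos hr₀] using hr₁, ?_⟩
  have hsplit := card_filter_add_card_filter_not (s := univ)
    (p := fun i => t < |(x : EuclideanSpace ℝ (Fin n)) i|)
  have hsmall : #{i | ¬ t < |(x : EuclideanSpace ℝ (Fin n)) i|} ≤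
      #{i | |(r • (x : EuclideanSpace ℝ (Fin n))) i| ≤ t} := by
    refine card_le_card (monotone_filter_right _ fun i _ hi => ?_)
    simp only [not_lt, PiLp.smul_apply, smul_eq_mul, abs_mul, abs_of_pos hr₀] at hi ⊢
    nlinarith [abs_nonneg ((x : EuclideanSpace ℝ (Fin n)) i)]
  have hlarge : 2 * #{i | t < |(x : EuclideanSpace ℝ (Fin n)) i|} ≤ n := by
    have hx : (#{i | t < |(x : EuclideanSpace ℝ (Fin n)) i|} : ℝ) ≤ n / 2 := hx
    have : (2 * #{i | t < |(x : EuclideanSpace ℝ (Fin n)) i|} : ℝ) ≤ n := by linarith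
    exact_mod_cast this
  rw [card_univ, Fintype.card_fin] at hsplit
  omega

end uniformSphere

/-- There is a universal constant `K` such that for a uniformly random point
`x` on `S^{n-1}`, with probability greater than `2/3`, more than `n/2` of the
coordinates of `x` satisfy `|x i| > 1/(K √n)`. -/
theorem many_large_coordinates_on_sphere :
    ∃ K : ℝ, 0 < K ∧ ∀ n : ℕ, 0 < n →
      (2 / 3 : ℝ≥0∞) <
        uniformSphere n
          {x | (n : ℝ) / 2 <
            ((Finset.univ.filter fun i : Fin n =>
              1 / (K * Real.sqrt n) < |(x : EuclideanSpace ℝ (Fin n)) i|).card : ℝ)} := by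
  refine ⟨20, by norm_num, fun n hn => ?_⟩
  obtain ⟨m, rfl⟩ := Nat.exists_eq_add_one.mpr hn
  set t := 1 / (20 * √((m + 1 : ℕ) : ℝ))
  set A := {x : sphere (0 : EuclideanSpace ℝ (Fin (m + 1))) 1 |
    ((m + 1 : ℕ) : ℝ) / 2 < #{i | t < |(x : EuclideanSpace ℝ (Fin (m + 1))) i|}}
  have hA : MeasurableSet A :=
    measurable_card_filter (fun i => measurableSet_lt measurable_const (by fun_prop))
      (MeasurableSet.of_discrete (s := {k : ℕ | ((m + 1 : ℕ) : ℝ) / 2 < k}))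
  have hcone : Ioo (0 : ℝ) 1 • ((↑) '' Aᶜ : Set (EuclideanSpace ℝ (Fin (m + 1)))) ⊆
      EuclideanSpace.ballManySmallCoords (m + 1) t := by
    simpa only [A, compl_ofPred, not_lt] using Ioo_smul_image_val_subset_ballManySmallCoords t
  have hcompl : uniformSphere (m + 1) Aᶜ < 1 / 3 := by
    rw [uniformSphere_apply hA.compl]
    refine ENNReal.div_lt_of_lt_mul ?_
    rw [one_div, ← ENNReal.div_eq_inv_mul, ENNReal.lt_div_iff_mul_lt (by norm_num) (by norm_num)]
    exact (mul_le_mul_left (measure_mono hcone) 3).trans_lt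
      (EuclideanSpace.volume_ballManySmallCoords_mul_three_lt m)
  have hthird : (1 : ℝ≥0∞) - 1 / 3 = 2 / 3 := by
    refine ENNReal.sub_eq_of_eq_add (by norm_num) ?_
    rw [ENNReal.div_add_div_same, show (2 + 1 : ℝ≥0∞) = 3 by norm_num,
      ENNReal.div_self (by norm_num) (by norm_num)]
  rw [prob_compl_eq_one_sub hA] at hcompl
  simpa only [hthird] using
    ENNReal.sub_lt_of_sub_lt (by norm_num) (Or.inl ENNReal.one_ne_top) hcompl
end

section
/- Let l be a symmetric norm on R^n, let v in S^{n-1} achieve l(v) = b_l (the maximum of l on the unit sphere), and let V be a random vector with independent coordinates V_i ~ N(0, v_i^2). Then E[l(V)] >= 0.49 * b_l. -/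
open MeasureTheory ProbabilityTheory Real
open scoped NNReal

/-!
Jensen's inequality for the convex function `l`, applied to the vector `|V|` of absolute values of
the coordinates, gives `E[l V] = E[l |V|] ≥ l (E |V|)`. Since `E |V i| = √(2/π) |v i|`, the right
side is `√(2/π) l v = √(2/π) b`, and `√(2/π) ≈ 0.798 ≥ 0.49`.
-/

theorem integral_Ioi_mul_exp_neg_mul_sq {b : ℝ} (hb : 0 < b) :
    ∫ x in Set.Ioi (0 : ℝ), x * exp (-b * x ^ 2) = (2 * b)⁻¹ := by
  have h := integral_mul_cexp_neg_mul_sq (b := (b : ℂ)) (by simpa using hb)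
  have : ((∫ x in Set.Ioi (0 : ℝ), x * exp (-b * x ^ 2) : ℝ) : ℂ) = ((2 * b)⁻¹ : ℝ) := by
    rw [← integral_complex_ofReal]
    push_cast
    exact h
  exact_mod_cast this

theorem integral_abs_gaussianReal (v : ℝ≥0) :
    ∫ x, |x| ∂gaussianReal 0 v = √(2 / π) * √v := by
  rcases eq_or_ne v 0 with rfl | hv
  · simp [gaussianReal_zero_var]
  have hv_pos : (0 : ℝ) < v := by positivity
  have hpdf : ∀ x : ℝ, gaussianPDFReal 0 v x • |x|
      = (√(2 * π * v))⁻¹ * (|x| * exp (-(2 * (v : ℝ))⁻¹ * |x| ^ 2)) := fun x => by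
    rw [gaussianPDFReal, smul_eq_mul, sq_abs, sub_zero]
    ring_nf
  rw [integral_gaussianReal_eq_integral_smul hv]
  simp_rw [hpdf]
  rw [integral_const_mul, integral_comp_abs (f := fun t => t * exp (-(2 * (v : ℝ))⁻¹ * t ^ 2)),
    integral_Ioi_mul_exp_neg_mul_sq (by positivity), sqrt_div' _ pi_pos.le, sqrt_mul' _ hv_pos.le,
    sqrt_mul zero_le_two]
  have hsqrt_two := sq_sqrt (zero_le_two (α := ℝ))
  have hsqrt_v := sq_sqrt hv_pos.le
  have hsqrt_v_pos : 0 < √(v : ℝ) := sqrt_pos.2 hv_pos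
  have hsqrt_pi_pos : 0 < √π := sqrt_pos.2 pi_pos
  field_simp
  nlinarith

theorem zero_point_four_nine_le_sqrt_two_div_pi : (0.49 : ℝ) ≤ √(2 / π) := by
  rw [le_sqrt' (by norm_num), le_div_iff₀ pi_pos]
  nlinarith [pi_lt_four]

section Seminorm

variable {E : Type*} [NormedAddCommGroup E] [NormedSpace ℝ E]

theorem Seminorm.continuous_of_finiteDimensional [FiniteDimensional ℝ E] (p : Seminorm ℝ E) :
    Continuous p :=
  continuousOn_univ.1 (p.convexOn.continuousOn isOpen_univ)

theorem Seminorm.apply_integral_le_integral [CompleteSpace E] {Ω : Type*} [MeasurableSpace Ω]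
    {μ : Measure Ω} [IsProbabilityMeasure μ] (p : Seminorm ℝ E) (hp : Continuous p)
    {X : Ω → E} (hX : Integrable X μ) :
    p (∫ ω, X ω ∂μ) ≤ ∫ ω, p (X ω) ∂μ := by
  obtain ⟨C, -, hC⟩ := p.bound_of_continuous_normedSpace hp
  have hpX : Integrable (fun ω => p (X ω)) μ :=
    (hX.norm.const_mul C).mono' (hp.comp_aestronglyMeasurable hX.1)
      (ae_of_all _ fun ω => by simpa [abs_of_nonneg (apply_nonneg p _)] using hC (X ω))
  exact p.convexOn.map_integral_le hp.continuousOn isClosed_univ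
    (ae_of_all _ fun _ => Set.mem_univ _) hX hpX

theorem Seminorm.apply_integral_abs_le_integral {ι : Type*} [Fintype ι] {Ω : Type*}
    [MeasurableSpace Ω] {μ : Measure Ω} [IsProbabilityMeasure μ] (p : Seminorm ℝ (ι → ℝ))
    (hp : ∀ x, p (fun i => |x i|) = p x) {X : Ω → ι → ℝ}
    (hX : ∀ i, Integrable (fun ω => X ω i) μ) :
    p (fun i => ∫ ω, |X ω i| ∂μ) ≤ ∫ ω, p (X ω) ∂μ := by
  have h := p.apply_integral_le_integral p.continuous_of_finiteDimensional
    (Integrable.of_eval fun i => (hX i).abs)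
  simp only [hp] at h
  rwa [funext (eval_integral fun i => (hX i).abs)] at h

end Seminorm

theorem expected_norm_of_randomized_maximizer_general {n : ℕ} (l : (Fin n → ℝ) → ℝ)
    (htri : ∀ x y, l (x + y) ≤ l x + l y)
    (hhom : ∀ (c : ℝ) x, l (c • x) = |c| * l x)
    (hsign : ∀ x, l (fun i => |x i|) = l x)
    (b : ℝ)
    (v : Fin n → ℝ) (hvb : l v = b) :
    0.49 * b ≤ ∫ x, l x ∂(Measure.pi fun i => gaussianReal 0 (Real.toNNReal ((v i) ^ 2))) := by
  set μ := Measure.pi fun i => gaussianReal 0 (Real.toNNReal ((v i) ^ 2)) with hμ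
  set p : Seminorm ℝ (Fin n → ℝ) := Seminorm.of l htri hhom
  have hcoord : ∀ i, Integrable (fun x : Fin n → ℝ => x i) μ := fun i =>
    integrable_eval ((memLp_id_gaussianReal 1).integrable le_rfl)
  have habs : (fun i => ∫ x, |x i| ∂μ) = √(2 / π) • fun i => |v i| := by
    ext i
    rw [hμ, integral_comp_eval (μ := fun i => gaussianReal 0 (Real.toNNReal ((v i) ^ 2)))
      (f := fun y : ℝ => |y|) continuous_abs.aestronglyMeasurable, integral_abs_gaussianReal,
      coe_toNNReal _ (sq_nonneg _), sqrt_sq_eq_abs, Pi.smul_apply, smul_eq_mul]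
  have hjensen := p.apply_integral_abs_le_integral hsign hcoord
  rw [habs, map_smul_eq_mul, norm_of_nonneg (sqrt_nonneg _)] at hjensen
  calc 0.49 * b ≤ √(2 / π) * b :=
        mul_le_mul_of_nonneg_right zero_point_four_nine_le_sqrt_two_div_pi (hvb ▸ apply_nonneg p v)
    _ = √(2 / π) * p (fun i => |v i|) := by rw [← hvb]; exact congrArg _ (hsign v).symm
    _ ≤ ∫ x, l x ∂μ := hjensen

/-- If `v ∈ S^{n-1}` achieves the maximum `b` of a symmetric norm `l` on the
unit sphere, and `V` has independent coordinates `V i ~ N(0, (v i)^2)`, then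
`E[l V] ≥ 0.49 * b`. -/
theorem expected_norm_of_randomized_maximizer {n : ℕ} (l : (Fin n → ℝ) → ℝ)
    (htri : ∀ x y, l (x + y) ≤ l x + l y)
    (hhom : ∀ (c : ℝ) x, l (c • x) = |c| * l x)
    (hdef : ∀ x, l x = 0 ↔ x = 0)
    (hperm : ∀ (σ : Equiv.Perm (Fin n)) x, l (fun i => x (σ i)) = l x)
    (hsign : ∀ x, l (fun i => |x i|) = l x)
    (b : ℝ) (hb : IsGreatest (l '' {x : Fin n → ℝ | ∑ i, (x i) ^ 2 = 1}) b)
    (v : Fin n → ℝ) (hv : ∑ i, (v i) ^ 2 = 1) (hvb : l v = b) :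
    0.49 * b ≤ ∫ x, l x ∂(Measure.pi fun i => gaussianReal 0 (Real.toNNReal ((v i) ^ 2))) :=
  expected_norm_of_randomized_maximizer_general l htri hhom hsign b v hvb
end

section
/- Let l be a Q-norm on R^n, i.e., l(x) = Phi(x^2)^{1/2} for a symmetric norm Phi, where x^2 denotes coordinate-wise squaring. Then for every integer 0 < n' <= n, l(xi^(n')) >= l(xi^(n))/2, where xi^(k) in R^n is the vector with first k coordinates equal to 1/sqrt(k) and zeros elsewhere. -/
/-! On `ℝⁿ` the squared vector `(ξ^(k))²` is `1/k` times the indicator of a block of `k`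
coordinates, so for the symmetric norm `Φ` it suffices to compare blocks. Flipping the signs of
the coordinates outside a set and averaging shows that zeroing coordinates does not increase `Φ`;
with permutation invariance, a block of at most `k` coordinates is no larger than one of exactly
`k`. Covering the `n` coordinates by `⌊n/k⌋ + 1 ≤ 2n/k` such blocks and applying the triangle
inequality gives `Φ((ξ^(n))²) ≤ 2 Φ((ξ^(k))²)`. -/

/-- The vector `ξ^(k)` in `ℝ^n`: first `k` coordinates equal to `1/√k`, zeros
elsewhere. -/
noncomputable def xiVec (n k : ℕ) : Fin n → ℝ :=
  fun i => if (i : ℕ) < k then 1 / Real.sqrt k else 0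

open Finset

namespace Seminorm

variable {ι : Type*} (p : Seminorm ℝ (ι → ℝ))

structure IsSymmetric_s15 : Prop where
  perm : ∀ (σ : Equiv.Perm ι) x, p (fun i => x (σ i)) = p x
  abs : ∀ x, p (fun i => |x i|) = p x

theorem apply_indicator_le (habs : ∀ x, p (fun i => |x i|) = p x) (s : Set ι) (x : ι → ℝ) :
    p (s.indicator x) ≤ p x := by
  classical
  let y : ι → ℝ := fun i => if i ∈ s then x i else -x i
  have hy : p y = p x := by
    rw [← habs y, ← habs x]
    congr 1
    ext i
    by_cases hi : i ∈ s <;> simp [y, hi]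
  have hsum : s.indicator x = (2⁻¹ : ℝ) • (x + y) := by
    ext i
    by_cases hi : i ∈ s <;> simp [y, hi]
    ring
  calc p (s.indicator x) = 2⁻¹ * p (x + y) := by rw [hsum, map_smul_eq_mul]; norm_num
    _ ≤ 2⁻¹ * (p x + p y) := by gcongr; exact map_add_le_add p x y
    _ = p x := by rw [hy]; ring

variable {p}

theorem IsSymmetric_s15.apply_indicator_one_le_of_card_le (hp : p.IsSymmetric_s15) {s t : Finset ι}
    (h : #s ≤ #t) :
    p ((s : Set ι).indicator 1) ≤ p ((t : Set ι).indicator 1) := by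
  obtain ⟨t', ht't, hcard⟩ := exists_subset_card_eq h
  obtain ⟨σ, hσ⟩ := Equiv.Perm.exists_map_finset_eq s t' hcard.symm
  have hst' : (s : Set ι).indicator 1 = fun i => (t' : Set ι).indicator (1 : ι → ℝ) (σ i) := by
    subst hσ
    ext i
    by_cases hi : i ∈ s <;> simp [hi]
  calc p ((s : Set ι).indicator 1) = p ((t' : Set ι).indicator 1) := by rw [hst', hp.perm]
    _ = p ((t' : Set ι).indicator ((t : Set ι).indicator 1)) := by
      rw [Set.indicator_indicator, Set.inter_eq_left.mpr (mod_cast ht't)]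
    _ ≤ p ((t : Set ι).indicator 1) := p.apply_indicator_le hp.abs _ _

theorem IsSymmetric_s15.apply_indicator_one_le_mul (hp : p.IsSymmetric_s15) {t : Finset ι} :
    ∀ {m : ℕ} {s : Finset ι}, #s ≤ m * #t →
      p ((s : Set ι).indicator 1) ≤ m * p ((t : Set ι).indicator 1)
  | 0, s, h => by
    rw [Nat.zero_mul, Nat.le_zero, card_eq_zero] at h
    rw [h, coe_empty, Set.indicator_empty', map_zero, Nat.cast_zero, zero_mul]
  | m + 1, s, h => by
    classical
    obtain ⟨s₁, hs₁s, hcard⟩ := exists_subset_card_eq (min_le_right #t #s)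
    have hsplit : (s : Set ι).indicator (1 : ι → ℝ) =
        (s₁ : Set ι).indicator 1 + ((s \ s₁ : Finset ι) : Set ι).indicator 1 := by
      conv_lhs => rw [← Set.union_sdiff_cancel (coe_subset.mpr hs₁s)]
      rw [coe_sdiff, Set.indicator_union_of_disjoint Set.disjoint_sdiff_right]
      rfl
    have hrest : #(s \ s₁) ≤ m * #t := by
      rw [card_sdiff_of_subset hs₁s, hcard]
      rw [add_one_mul] at h
      omega
    calc p ((s : Set ι).indicator 1)
        ≤ p ((s₁ : Set ι).indicator 1) + p (((s \ s₁ : Finset ι) : Set ι).indicator 1) := by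
          rw [hsplit]; exact map_add_le_add _ _ _
      _ ≤ p ((t : Set ι).indicator 1) + m * p ((t : Set ι).indicator 1) := by
          gcongr
          · exact hp.apply_indicator_one_le_of_card_le (hcard ▸ min_le_left _ _)
          · exact hp.apply_indicator_one_le_mul hrest
      _ = (m + 1 : ℕ) * p ((t : Set ι).indicator 1) := by push_cast; ring

theorem IsSymmetric_s15.apply_indicator_one_div_card_le (hp : p.IsSymmetric_s15) {s t : Finset ι}
    (ht : 0 < #t) (hts : #t ≤ #s) :
    p ((s : Set ι).indicator 1) / #s ≤ 2 * (p ((t : Set ι).indicator 1) / #t) := by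
  set m := #s / #t + 1
  have hcover : #s ≤ m * #t := by
    have := Nat.lt_div_mul_add (a := #s) ht
    rw [add_one_mul]
    omega
  have hcount : (m : ℝ) * #t ≤ 2 * #s := by
    have := Nat.div_mul_le_self #s #t
    exact_mod_cast (by rw [add_one_mul]; omega : m * #t ≤ 2 * #s)
  rw [div_le_iff₀ (mod_cast ht.trans_le hts)]
  calc p ((s : Set ι).indicator 1) ≤ m * p ((t : Set ι).indicator 1) :=
        hp.apply_indicator_one_le_mul hcover
    _ = m * #t * (p ((t : Set ι).indicator 1) / #t) := by field_simp
    _ ≤ 2 * #s * (p ((t : Set ι).indicator 1) / #t) := by gcongr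
    _ = 2 * (p ((t : Set ι).indicator 1) / #t) * #s := by ring

end Seminorm

theorem xiVec_sq (n k : ℕ) :
    (fun i => xiVec n k i ^ 2) =
      (k : ℝ)⁻¹ • ((({i : Fin n | (i : ℕ) < k} : Finset (Fin n)) : Set (Fin n)).indicator 1) := by
  ext i
  by_cases hi : (i : ℕ) < k
  · simp [xiVec, hi, Real.sq_sqrt k.cast_nonneg]
  · simp [xiVec, hi]

theorem qnorm_xi_monotone_general {n : ℕ} (Φ : (Fin n → ℝ) → ℝ)
    (htri : ∀ x y, Φ (x + y) ≤ Φ x + Φ y)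
    (hhom : ∀ (c : ℝ) x, Φ (c • x) = |c| * Φ x)
    (hperm : ∀ (σ : Equiv.Perm (Fin n)) x, Φ (fun i => x (σ i)) = Φ x)
    (hsign : ∀ x, Φ (fun i => |x i|) = Φ x)
    (n' : ℕ) (hn'₀ : 0 < n') (hn' : n' ≤ n) :
    Real.sqrt (Φ (fun i => (xiVec n n i) ^ 2)) / 2 ≤
      Real.sqrt (Φ (fun i => (xiVec n n' i) ^ 2)) := by
  let p : Seminorm ℝ (Fin n → ℝ) := .of Φ htri (by simpa only [Real.norm_eq_abs] using hhom)
  have hcard {k : ℕ} (hk : k ≤ n) : #{i : Fin n | (i : ℕ) < k} = k := by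
    simp [Fin.card_filter_val_lt, hk]
  have hp : p.IsSymmetric_s15 := ⟨hperm, hsign⟩
  have hblocks := hp.apply_indicator_one_div_card_le
    (s := {i : Fin n | (i : ℕ) < n}) (t := {i : Fin n | (i : ℕ) < n'})
    (by rwa [hcard hn']) (by rwa [hcard hn', hcard le_rfl])
  rw [hcard hn', hcard le_rfl] at hblocks
  rw [xiVec_sq, xiVec_sq, hhom, hhom, abs_of_nonneg (by positivity),
    abs_of_nonneg (by positivity), inv_mul_eq_div, inv_mul_eq_div]
  change √(p _ / _) / 2 ≤ √(p _ / _)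
  refine (div_le_iff₀ two_pos).2 ((Real.sqrt_le_sqrt hblocks).trans ?_)
  rw [Real.sqrt_mul zero_le_two, mul_comm]
  gcongr
  exact (Real.sqrt_le_left zero_le_two).2 (by norm_num)

/-- For a Q-norm `l(x) = Φ(x²)^{1/2}` (with `Φ` a symmetric norm and `x²` the
coordinate-wise square), `l(ξ^(n')) ≥ l(ξ^(n)) / 2` for every `0 < n' ≤ n`. -/
theorem qnorm_xi_monotone {n : ℕ} (Φ : (Fin n → ℝ) → ℝ)
    (htri : ∀ x y, Φ (x + y) ≤ Φ x + Φ y)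
    (hhom : ∀ (c : ℝ) x, Φ (c • x) = |c| * Φ x)
    (hdef : ∀ x, Φ x = 0 ↔ x = 0)
    (hperm : ∀ (σ : Equiv.Perm (Fin n)) x, Φ (fun i => x (σ i)) = Φ x)
    (hsign : ∀ x, Φ (fun i => |x i|) = Φ x)
    (n' : ℕ) (hn'₀ : 0 < n') (hn' : n' ≤ n) :
    Real.sqrt (Φ (fun i => (xiVec n n i) ^ 2)) / 2 ≤
      Real.sqrt (Φ (fun i => (xiVec n n' i) ^ 2)) :=
  qnorm_xi_monotone_general Φ htri hhom hperm hsign n' hn'₀ hn'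
end

section
/- Let l be a Q-norm on R^n. Then for every x on the Euclidean unit sphere S^{n-1}, l(xi^(n)) <= 6*sqrt(log n)*l(x), where xi^(n) = (1/sqrt(n))(1,...,1). In other words, the normalized all-ones vector approximately minimizes a Q-norm over the unit sphere up to a factor 6*sqrt(log n). -/
/-!
The squared coordinates `x²` of a unit vector lie on the probability simplex, whose
barycenter is `ξ² = (1/n, …, 1/n)`. Averaging `x²` over the `n` cyclic shifts of the
coordinates gives exactly `ξ²`, so the triangle inequality, homogeneity and permutation
invariance of `Φ` yield `Φ(ξ²) ≤ Φ(x²)`, i.e. `l(ξ) ≤ l(x)`. The factor `6 √(log n)` is at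
least `1` for `n ≥ 2`.
-/

theorem Seminorm.apply_const_mean_le {n : ℕ} [NeZero n] (p : Seminorm ℝ (Fin n → ℝ))
    (hp : ∀ (σ : Equiv.Perm (Fin n)) y, p (fun i => y (σ i)) = p y) (y : Fin n → ℝ) :
    p (fun _ => (∑ i, y i) / n) ≤ p y := by
  have hmean :
      (fun _ => (∑ i, y i) / n) = (n : ℝ)⁻¹ • ∑ k : Fin n, fun i => y (i + k) := by
    ext i
    simp only [Pi.smul_apply, Finset.sum_apply, smul_eq_mul]
    rw [div_eq_inv_mul, ← Equiv.sum_comp (Equiv.addLeft i) y]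
    rfl
  have hshift (k : Fin n) : (p fun i => y (i + k)) = p y := hp (Equiv.addRight k) y
  calc p (fun _ => (∑ i, y i) / n)
      ≤ (n : ℝ)⁻¹ * ∑ k : Fin n, p fun i => y (i + k) := by
        rw [hmean, map_smul_eq_mul, Real.norm_of_nonneg (by positivity)]
        gcongr
        exact Finset.le_sum_of_subadditive p (map_zero p).le (map_add_le_add p) _ _
    _ = p y := by
        simp only [hshift, Finset.sum_const, Finset.card_univ, Fintype.card_fin, nsmul_eq_mul]
        exact inv_mul_cancel_left₀ (Nat.cast_ne_zero.mpr (NeZero.ne n)) _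

theorem one_le_six_mul_sqrt_log {x : ℝ} (hx : 2 ≤ x) : 1 ≤ 6 * Real.sqrt (Real.log x) := by
  have hlog : Real.log 2 ≤ Real.log x := Real.log_le_log two_pos hx
  have h6 : 1 / 6 ≤ Real.sqrt (Real.log x) :=
    (Real.le_sqrt (by norm_num) (by linarith [Real.log_two_gt_d9])).mpr
      (by linarith [Real.log_two_gt_d9])
  linarith

theorem qnorm_flat_minimum_general {n : ℕ} (hn : 2 ≤ n) (Φ : (Fin n → ℝ) → ℝ)
    (htri : ∀ x y, Φ (x + y) ≤ Φ x + Φ y)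
    (hhom : ∀ (c : ℝ) x, Φ (c • x) = |c| * Φ x)
    (hperm : ∀ (σ : Equiv.Perm (Fin n)) x, Φ (fun i => x (σ i)) = Φ x)
    (x : Fin n → ℝ) (hx : ∑ i, (x i) ^ 2 = 1) :
    Real.sqrt (Φ (fun _ => (1 / Real.sqrt n) ^ 2)) ≤
      6 * Real.sqrt (Real.log n) * Real.sqrt (Φ (fun i => (x i) ^ 2)) := by
  have : NeZero n := ⟨by omega⟩
  have hflat : (fun _ : Fin n => (1 / Real.sqrt n) ^ 2) = fun _ => (∑ i, x i ^ 2) / n := by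
    ext
    rw [hx, div_pow, one_pow, Real.sq_sqrt n.cast_nonneg]
  have hmin : Φ (fun _ => (1 / Real.sqrt n) ^ 2) ≤ Φ (fun i => x i ^ 2) := by
    rw [hflat]
    exact (Seminorm.of Φ htri hhom).apply_const_mean_le hperm _
  calc Real.sqrt (Φ (fun _ => (1 / Real.sqrt n) ^ 2))
      ≤ Real.sqrt (Φ (fun i => x i ^ 2)) := Real.sqrt_le_sqrt hmin
    _ ≤ 6 * Real.sqrt (Real.log n) * Real.sqrt (Φ (fun i => x i ^ 2)) :=
        le_mul_of_one_le_left (Real.sqrt_nonneg _)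
          (one_le_six_mul_sqrt_log (by exact_mod_cast hn))

/-- Flat minimum for Q-norms: for a Q-norm `l(x) = Φ(x²)^{1/2}` on `ℝ^n`
(`Φ` a symmetric norm, `x²` the coordinate-wise square) and every `x` on the
Euclidean unit sphere, `l(ξ^(n)) ≤ 6 √(log n) · l(x)`, where
`ξ^(n) = (1/√n)(1,…,1)`. -/
theorem qnorm_flat_minimum {n : ℕ} (hn : 2 ≤ n) (Φ : (Fin n → ℝ) → ℝ)
    (htri : ∀ x y, Φ (x + y) ≤ Φ x + Φ y)
    (hhom : ∀ (c : ℝ) x, Φ (c • x) = |c| * Φ x)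
    (hdef : ∀ x, Φ x = 0 ↔ x = 0)
    (hperm : ∀ (σ : Equiv.Perm (Fin n)) x, Φ (fun i => x (σ i)) = Φ x)
    (hsign : ∀ x, Φ (fun i => |x i|) = Φ x)
    (x : Fin n → ℝ) (hx : ∑ i, (x i) ^ 2 = 1) :
    Real.sqrt (Φ (fun _ => (1 / Real.sqrt n) ^ 2)) ≤
      6 * Real.sqrt (Real.log n) * Real.sqrt (Φ (fun i => (x i) ^ 2)) :=
  qnorm_flat_minimum_general hn Φ htri hhom hperm x hx
end
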